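/- Let c ∈ M^l be a codeword and v = c + e with Hamming weight ω(e) ≤ t, where t is the largest integer with 2t+1 ≤ 2^l. Then the remainder of v on division by G equals the remainder of e on division by G. In particular, if this remainder is zero then e = 0 and v = c. -/

import Mathlib

/-!
Over `𝔽₂` the substitution `Xᵢ ↦ Xᵢ + 1` (`MvPolynomial.shiftOne`) is an involution sending
`Xᵢ - 1` to `Xᵢ` and preserving squarefree polynomials. It turns `M` into the ideal of the
variables, the relations `Xᵢ² - 1` into `Xᵢ²`, and `⟨G⟩` into the ideal spanned by the squarefree
monomials of degree `l`. All of these are monomial ideals, so a squarefree `c ∈ Mˡ` lies in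
`⟨G⟩`, and `v = c + e` and `e` have the same remainders.

For the second part, view the support of a squarefree `e` as a family `S` of subsets. The
coefficient of `X_J` in the shifted `e` is the parity of `#{K ∈ S | J ⊆ K}`, so `e ∈ ⟨G⟩` forces
these numbers to be even for `|J| < l`. Splitting such a nonempty family along a coordinate on
which two members differ gives two nonempty families of the same kind for `l - 1`, so
`#S ≥ 2ˡ > t ≥ ω(e)` unless `e = 0`.
-/

set_option synthInstance.maxHeartbeats 1000000
set_option maxHeartbeats 1000000

open MvPolynomial

noncomputable def gI (m : ℕ) (I : Finset (Fin m)) : MvPolynomial (Fin m) (ZMod 2) :=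
  ∏ i ∈ I, (X i - 1)

noncomputable def XI (m : ℕ) (I : Finset (Fin m)) : MvPolynomial (Fin m) (ZMod 2) :=
  ∏ i ∈ I, X i

/-- The ideal (X₁²-1, …, Xₘ²-1). -/
noncomputable def relIdeal (m : ℕ) : Ideal (MvPolynomial (Fin m) (ZMod 2)) :=
  Ideal.span {p | ∃ i : Fin m, p = X i ^ 2 - 1}

/-- The ambient algebra A = F₂[X₁,…,Xₘ]/(X₁²-1,…,Xₘ²-1). -/
abbrev Amb (m : ℕ) := MvPolynomial (Fin m) (ZMod 2) ⧸ relIdeal m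

/-- The ideal M of A generated by the images of the Xᵢ - 1. -/
noncomputable def Mideal (m : ℕ) : Ideal (Amb m) :=
  Ideal.span {a | ∃ i : Fin m, a = Ideal.Quotient.mk (relIdeal m) (X i - 1)}

/-- G = {∏_{i∈I}(Xᵢ-1) : |I| = l}. -/
def Gset (m l : ℕ) : Set (MvPolynomial (Fin m) (ZMod 2)) :=
  {p | ∃ I : Finset (Fin m), I.card = l ∧ p = gI m I}

/-- `IsRemainder m l f r` : r is the remainder of f on division by the Groebner basis
G = {∏_{i∈I}(Xᵢ-1) : |I| = l} (grlex order): f - r ∈ ⟨G⟩ and no term of r is divisible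
by any of the leading terms X_I (|I| = l) of the members of G. -/
def IsRemainder (m l : ℕ) (f r : MvPolynomial (Fin m) (ZMod 2)) : Prop :=
  f - r ∈ Ideal.span (Gset m l) ∧
  ∀ α ∈ r.support, ∀ I : Finset (Fin m), I.card = l → ¬ I ⊆ α.support

open Finset

theorem Finset.two_pow_le_card_of_even_card_filter_superset {α : Type*} [DecidableEq α] :
    ∀ (l : ℕ) {S : Finset (Finset α)}, S.Nonempty →
      (∀ J : Finset α, #J < l → Even #{K ∈ S | J ⊆ K}) → 2 ^ l ≤ #S
  | 0, _, hS, _ => by simpa using hS.card_pos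
  | l + 1, S, hS, heven => by
    obtain ⟨K₁, hK₁, K₂, hK₂, hne⟩ : ∃ K₁ ∈ S, ∃ K₂ ∈ S, K₁ ≠ K₂ := by
      have hS2 : Even #S := by simpa using heven ∅ (by simp)
      rw [← one_lt_card]
      have := hS.card_pos
      rcases hS2 with ⟨k, hk⟩
      omega
    obtain ⟨i, hi⟩ : ∃ i, ¬(i ∈ K₁ ↔ i ∈ K₂) := by
      by_contra! h
      exact hne (ext h)
    have hin (J : Finset α) : {K ∈ {K ∈ S | i ∈ K} | J ⊆ K} = {K ∈ S | insert i J ⊆ K} := by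
      ext K
      simp only [mem_filter, insert_subset_iff]
      tauto
    have hout (J : Finset α) : #{K ∈ S | J ⊆ K} =
        #{K ∈ S | insert i J ⊆ K} + #{K ∈ {K ∈ S | i ∉ K} | J ⊆ K} := by
      rw [← card_filter_add_card_filter_not (p := fun K => i ∈ K)]
      congr 2 <;> ext K <;> simp only [mem_filter, insert_subset_iff] <;> tauto
    have hcard (J : Finset α) (hJ : #J < l) : #(insert i J) < l + 1 :=
      (card_insert_le i J).trans_lt (by omega)
    have h_in : 2 ^ l ≤ #{K ∈ S | i ∈ K} := by
      refine two_pow_le_card_of_even_card_filter_superset l ?_ fun J hJ => ?_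
      · by_cases h : i ∈ K₁
        · exact ⟨K₁, mem_filter.2 ⟨hK₁, h⟩⟩
        · exact ⟨K₂, mem_filter.2 ⟨hK₂, by tauto⟩⟩
      · rw [hin]
        exact heven _ (hcard J hJ)
    have h_out : 2 ^ l ≤ #{K ∈ S | i ∉ K} := by
      refine two_pow_le_card_of_even_card_filter_superset l ?_ fun J hJ => ?_
      · by_cases h : i ∈ K₁
        · exact ⟨K₂, mem_filter.2 ⟨hK₂, by tauto⟩⟩
        · exact ⟨K₁, mem_filter.2 ⟨hK₁, h⟩⟩
      · have h1 := heven J (by omega)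
        rw [hout] at h1
        exact (Nat.even_add.1 h1).1 (heven _ (hcard J hJ))
    rw [← card_filter_add_card_filter_not (p := fun K => i ∈ K), pow_succ]
    omega

namespace MvPolynomial

variable {σ : Type*}

noncomputable def sqfreeExp (I : Finset σ) : σ →₀ ℕ := ∑ i ∈ I, Finsupp.single i 1

section sqfreeExp

variable [DecidableEq σ]

lemma sqfreeExp_apply (I : Finset σ) (i : σ) : sqfreeExp I i = if i ∈ I then 1 else 0 := by
  simp [sqfreeExp, Finsupp.finsetSum_apply, Finsupp.single_apply]

lemma support_sqfreeExp (I : Finset σ) : (sqfreeExp I).support = I := by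
  ext i; simp [sqfreeExp_apply]

lemma sqfreeExp_injective : Function.Injective (sqfreeExp : Finset σ → σ →₀ ℕ) := fun I J h => by
  rw [← support_sqfreeExp I, h, support_sqfreeExp]

lemma sqfreeExp_support {α : σ →₀ ℕ} (hα : ∀ i, α i ≤ 1) : sqfreeExp α.support = α := by
  ext i
  have := hα i
  simp only [sqfreeExp_apply, Finsupp.mem_support_iff]
  split_ifs <;> omega

end sqfreeExp

lemma degree_sqfreeExp (I : Finset σ) : (sqfreeExp I).degree = #I := by
  simp [sqfreeExp, map_sum, Finsupp.degree_single]

lemma prod_X_eq_monomial_sqfreeExp {R : Type*} [CommSemiring R] (I : Finset σ) :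
    ∏ i ∈ I, (X i : MvPolynomial σ R) = monomial (sqfreeExp I) 1 := by
  rw [sqfreeExp, monomial_sum_one]
  rfl

noncomputable def shiftOne : MvPolynomial σ (ZMod 2) ≃ₐ[ZMod 2] MvPolynomial σ (ZMod 2) :=
  have h : (aeval fun i => X i + 1 : MvPolynomial σ (ZMod 2) →ₐ[ZMod 2] _).comp
      (aeval fun i => X i + 1) = AlgHom.id _ _ := by
    ext i
    simp [add_assoc, CharTwo.add_self_eq_zero]
  AlgEquiv.ofAlgHom _ _ h h

lemma shiftOne_X (i : σ) : shiftOne (X i : MvPolynomial σ (ZMod 2)) = X i + 1 :=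
  aeval_X _ i

lemma shiftOne_shiftOne (p : MvPolynomial σ (ZMod 2)) : shiftOne (shiftOne p) = p := by
  induction p using MvPolynomial.induction_on with
  | C a => simp [shiftOne, algebraMap_eq]
  | add p q hp hq => rw [map_add, map_add, hp, hq]
  | mul_X p i hp => rw [map_mul, map_mul, hp, shiftOne_X, map_add, shiftOne_X, map_one, add_assoc,
      CharTwo.add_self_eq_zero, add_zero]

lemma mem_map_shiftOne_iff {K : Ideal (MvPolynomial σ (ZMod 2))} {p : MvPolynomial σ (ZMod 2)} :
    p ∈ K.map shiftOne ↔ shiftOne p ∈ K := by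
  rw [Ideal.mem_map_of_equiv]
  constructor
  · rintro ⟨q, hq, rfl⟩
    rwa [shiftOne_shiftOne]
  · exact fun h => ⟨_, h, shiftOne_shiftOne p⟩

lemma shiftOne_prod_X (I : Finset σ) :
    shiftOne (∏ i ∈ I, X i) = ∏ i ∈ I, (X i - 1 : MvPolynomial σ (ZMod 2)) := by
  simp only [map_prod, shiftOne_X, CharTwo.sub_eq_add]

lemma shiftOne_monomial_sqfreeExp (I : Finset σ) :
    shiftOne (monomial (sqfreeExp I) (1 : ZMod 2)) =
      ∑ T ∈ I.powerset, monomial (sqfreeExp T) 1 := by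
  classical
  rw [← prod_X_eq_monomial_sqfreeExp, map_prod]
  simp only [shiftOne_X]
  rw [Finset.prod_add]
  simp only [Finset.prod_const_one, mul_one, prod_X_eq_monomial_sqfreeExp]

lemma shiftOne_X_sq (i : σ) : shiftOne (X i ^ 2 : MvPolynomial σ (ZMod 2)) = X i ^ 2 - 1 := by
  rw [map_pow, shiftOne_X, CharTwo.add_sq, one_pow, CharTwo.sub_eq_add]

section squarefree

variable [DecidableEq σ] {p : MvPolynomial σ (ZMod 2)}

lemma support_injOn_of_mem_restrictDegree (hp : p ∈ restrictDegree σ (ZMod 2) 1) :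
    Set.InjOn Finsupp.support (p.support : Set (σ →₀ ℕ)) := by
  rw [mem_restrictDegree] at hp
  intro α hα β hβ h
  rw [← sqfreeExp_support (hp α hα), h, sqfreeExp_support (hp β hβ)]

lemma eq_sum_monomial_sqfreeExp (hp : p ∈ restrictDegree σ (ZMod 2) 1) :
    p = ∑ K ∈ p.support.image Finsupp.support, monomial (sqfreeExp K) 1 := by
  rw [Finset.sum_image (support_injOn_of_mem_restrictDegree hp)]
  conv_lhs => rw [p.as_sum]
  refine Finset.sum_congr rfl fun α hα => ?_
  have hcoeff : ∀ a : ZMod 2, a ≠ 0 → a = 1 := by decide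
  rw [sqfreeExp_support ((mem_restrictDegree σ p 1).1 hp α hα), hcoeff _ (mem_support_iff.1 hα)]

lemma shiftOne_mem_restrictDegree (hp : p ∈ restrictDegree σ (ZMod 2) 1) :
    shiftOne p ∈ restrictDegree σ (ZMod 2) 1 := by
  rw [eq_sum_monomial_sqfreeExp hp, map_sum]
  refine Submodule.sum_mem _ fun K _ => ?_
  rw [shiftOne_monomial_sqfreeExp]
  refine Submodule.sum_mem _ fun T _ => (mem_restrictDegree _ _ _).2 fun α hα i => ?_
  rw [Finset.mem_singleton.1 (support_monomial_subset hα), sqfreeExp_apply]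
  split_ifs <;> omega

lemma coeff_sqfreeExp_shiftOne (hp : p ∈ restrictDegree σ (ZMod 2) 1) (J : Finset σ) :
    coeff (sqfreeExp J) (shiftOne p) = #{K ∈ p.support.image Finsupp.support | J ⊆ K} := by
  conv_lhs => rw [eq_sum_monomial_sqfreeExp hp]
  simp only [map_sum, shiftOne_monomial_sqfreeExp, coeff_sum, coeff_monomial,
    sqfreeExp_injective.eq_iff, sum_ite_eq', mem_powerset, sum_boole]

end squarefree

lemma mem_span_monomial_sqfreeExp_of_mem_pow_idealOfVars_sup {R : Type*} [CommSemiring R]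
    {l : ℕ} {q : MvPolynomial σ R} (hq : q ∈ restrictDegree σ R 1)
    (h : q ∈ idealOfVars σ R ^ l ⊔ Ideal.span (Set.range fun i => X i ^ 2)) :
    q ∈ Ideal.span ((monomial · 1) '' (sqfreeExp '' {I | #I = l})) := by
  classical
  have hsq : (Set.range fun i => (X i ^ 2 : MvPolynomial σ R)) =
      (monomial · 1) '' Set.range fun i => Finsupp.single i 2 := by
    rw [← Set.range_comp]
    simp [Function.comp_def, X_pow_eq_monomial]
  rw [pow_idealOfVars_eq_span, hsq, ← Ideal.span_union, ← Set.image_union,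
    mem_ideal_span_monomial_image] at h
  rw [mem_ideal_span_monomial_image]
  intro β hβ
  have hβ1 := (mem_restrictDegree σ q 1).1 hq β hβ
  obtain ⟨α, hα | ⟨i, rfl⟩, hαβ⟩ := h β hβ
  · have hα1 : ∀ i, α i ≤ 1 := fun i => (hαβ i).trans (hβ1 i)
    have hcard : #α.support = l := by rw [← degree_sqfreeExp, sqfreeExp_support hα1]; exact hα
    exact ⟨α, ⟨α.support, hcard, sqfreeExp_support hα1⟩, hαβ⟩
  · have := (hαβ i).trans (hβ1 i)
    simp at this

end MvPolynomial

open MvPolynomial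

section

variable {m l : ℕ}

lemma span_Gset_eq_map_shiftOne :
    Ideal.span (Gset m l) =
      (Ideal.span ((monomial · 1) '' (sqfreeExp '' {I | #I = l}))).map shiftOne := by
  rw [Ideal.map_span, Set.image_image, Set.image_image]
  simp only [← prod_X_eq_monomial_sqfreeExp, shiftOne_prod_X]
  congr 1
  ext p
  exact ⟨fun ⟨I, hI, h⟩ => ⟨I, hI, h.symm⟩, fun ⟨I, hI, h⟩ => ⟨I, hI, h.symm⟩⟩

lemma relIdeal_eq_map_shiftOne :
    relIdeal m = (Ideal.span (Set.range fun i => X i ^ 2)).map shiftOne := by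
  rw [Ideal.map_span, ← Set.range_comp]
  simp only [relIdeal, Function.comp_def, shiftOne_X_sq]
  congr 1
  ext p
  simp [eq_comm]

lemma Mideal_eq_map_shiftOne :
    Mideal m =
      ((idealOfVars (Fin m) (ZMod 2)).map shiftOne).map (Ideal.Quotient.mk (relIdeal m)) := by
  rw [Ideal.map_span, Ideal.map_span, ← Set.range_comp, ← Set.range_comp]
  simp only [Mideal, Function.comp_def, shiftOne_X, CharTwo.sub_eq_add]
  congr 1
  ext p
  simp [eq_comm]

lemma mem_span_Gset_of_mk_mem_Mideal_pow {c : MvPolynomial (Fin m) (ZMod 2)}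
    (hc : c ∈ restrictDegree (Fin m) (ZMod 2) 1)
    (hcM : Ideal.Quotient.mk (relIdeal m) c ∈ Mideal m ^ l) :
    c ∈ Ideal.span (Gset m l) := by
  rw [Mideal_eq_map_shiftOne, ← Ideal.map_pow, ← Ideal.map_pow,
    Ideal.mem_map_iff_of_surjective _ Ideal.Quotient.mk_surjective] at hcM
  obtain ⟨x, hx, hxc⟩ := hcM
  rw [Ideal.Quotient.eq, relIdeal_eq_map_shiftOne, mem_map_shiftOne_iff, map_sub] at hxc
  rw [mem_map_shiftOne_iff] at hx
  have hsup : shiftOne c ∈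
      idealOfVars (Fin m) (ZMod 2) ^ l ⊔ Ideal.span (Set.range fun i => X i ^ 2) := by
    simpa only [sub_sub_cancel] using Submodule.sub_mem_sup hx hxc
  rw [span_Gset_eq_map_shiftOne, mem_map_shiftOne_iff]
  exact mem_span_monomial_sqfreeExp_of_mem_pow_idealOfVars_sup
    (shiftOne_mem_restrictDegree hc) hsup

lemma coeff_sqfreeExp_shiftOne_eq_zero {e : MvPolynomial (Fin m) (ZMod 2)}
    (he : e ∈ Ideal.span (Gset m l)) {J : Finset (Fin m)} (hJ : #J < l) :
    coeff (sqfreeExp J) (shiftOne e) = 0 := by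
  have hle : Ideal.span ((monomial · 1) '' (sqfreeExp '' {I | #I = l})) ≤
      idealOfVars (Fin m) (ZMod 2) ^ l := by
    rw [pow_idealOfVars_eq_span]
    refine Ideal.span_mono (Set.image_mono ?_)
    rintro _ ⟨I, hI, rfl⟩
    exact (degree_sqfreeExp I).trans hI
  rw [span_Gset_eq_map_shiftOne, mem_map_shiftOne_iff] at he
  exact (mem_pow_idealOfVars_iff' l _).1 (hle he) _ (by rwa [degree_sqfreeExp])

theorem two_pow_le_card_support_of_mem_span_Gset {e : MvPolynomial (Fin m) (ZMod 2)}
    (he : e ∈ restrictDegree (Fin m) (ZMod 2) 1) (hG : e ∈ Ideal.span (Gset m l))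
    (hne : e ≠ 0) : 2 ^ l ≤ #e.support := by
  rw [← card_image_of_injOn (support_injOn_of_mem_restrictDegree he)]
  refine two_pow_le_card_of_even_card_filter_superset l
    ((support_nonempty.2 hne).image _) fun J hJ => ?_
  rw [← ZMod.natCast_eq_zero_iff_even, ← coeff_sqfreeExp_shiftOne he]
  exact coeff_sqfreeExp_shiftOne_eq_zero hG hJ

lemma isRemainder_add_left_iff {c e r : MvPolynomial (Fin m) (ZMod 2)}
    (hc : c ∈ Ideal.span (Gset m l)) : IsRemainder m l (c + e) r ↔ IsRemainder m l e r := by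
  rw [IsRemainder, IsRemainder, add_sub_assoc, Submodule.add_mem_iff_right _ hc]

end

theorem stmt15_general (m l t : ℕ)
    (ht : 2 * t + 1 ≤ 2 ^ l ∧ ∀ s : ℕ, 2 * s + 1 ≤ 2 ^ l → s ≤ t)
    (c e v : MvPolynomial (Fin m) (ZMod 2))
    (hc : ∀ α ∈ c.support, ∀ i : Fin m, α i ≤ 1)
    (he : ∀ α ∈ e.support, ∀ i : Fin m, α i ≤ 1)
    (hcM : Ideal.Quotient.mk (relIdeal m) c ∈ Mideal m ^ l)
    (hv : v = c + e) (hew : e.support.card ≤ t) :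
    (∀ r : MvPolynomial (Fin m) (ZMod 2), IsRemainder m l v r ↔ IsRemainder m l e r) ∧
    (IsRemainder m l v 0 → e = 0 ∧ v = c) := by
  have hcG := mem_span_Gset_of_mk_mem_Mideal_pow ((mem_restrictDegree _ c 1).2 hc) hcM
  have hrem (r) : IsRemainder m l v r ↔ IsRemainder m l e r := hv ▸ isRemainder_add_left_iff hcG
  refine ⟨hrem, fun hv0 => ?_⟩
  have he0 : e = 0 := by
    by_contra hne
    have heG : e ∈ Ideal.span (Gset m l) := by simpa using ((hrem 0).1 hv0).1
    have := two_pow_le_card_support_of_mem_span_Gset ((mem_restrictDegree _ e 1).2 he) heG hne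
    have := ht.1
    omega
  exact ⟨he0, by rw [hv, he0, add_zero]⟩

/-- if v = c + e with c ∈ Mˡ and ω(e) ≤ t (t the largest integer with
2t+1 ≤ 2ˡ), then the remainder of v mod G equals the remainder of e mod G; in
particular if that remainder is zero then e = 0 and v = c. -/
theorem stmt15 (m l t : ℕ) (hl1 : 1 ≤ l) (hlm : l ≤ m)
    (ht : 2 * t + 1 ≤ 2 ^ l ∧ ∀ s : ℕ, 2 * s + 1 ≤ 2 ^ l → s ≤ t)
    (c e v : MvPolynomial (Fin m) (ZMod 2))
    (hc : ∀ α ∈ c.support, ∀ i : Fin m, α i ≤ 1)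
    (he : ∀ α ∈ e.support, ∀ i : Fin m, α i ≤ 1)
    (hcM : Ideal.Quotient.mk (relIdeal m) c ∈ Mideal m ^ l)
    (hv : v = c + e) (hew : e.support.card ≤ t) :
    (∀ r : MvPolynomial (Fin m) (ZMod 2), IsRemainder m l v r ↔ IsRemainder m l e r) ∧
    (IsRemainder m l v 0 → e = 0 ∧ v = c) :=
  stmt15_general m l t ht c e v hc he hcM hv hew
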